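/- Success probability of the uniform random policy on the chain: Equip Ω = ℕ → Bool with the product measure of countably many uniform Bernoulli(1/2) distributions. For ω ∈ Ω, define the random rollout from s_i in the chain system with parameter D by x₀ = s_i and x_{n+1} = t x_n (ω n). Then for every 0 ≤ i ≤ m ≤ D, the probability of the event {ω : ∃ n, x_n = s_m} equals 2^{−(m−i)}. -/
import Mathlib


open MeasureTheory
open scoped ENNReal

/-- The transition function of the chain system with parameter `D`: states are
`s_0, …, s_D, s_{D+1}`; for `i ≤ D`, action `true` moves `s_i` to `s_{i+1}` and
action `false` moves to the absorbing sink `s_{D+1}`. -/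
def chainStep (D : ℕ) (i : Fin (D + 2)) (a : Bool) : Fin (D + 2) :=
  if h : (i : ℕ) ≤ D ∧ a = true then ⟨(i : ℕ) + 1, by omega⟩ else ⟨D + 1, by omega⟩

/-- The random rollout in the chain system driven by the action sequence `ω`:
`x₀ = s` and `x_{n+1} = t x_n (ω n)`. -/
def randRollout (D : ℕ) (ω : ℕ → Bool) (s : Fin (D + 2)) : ℕ → Fin (D + 2)
  | 0 => s
  | n + 1 => chainStep D (randRollout D ω s n) (ω n)

lemma rollout_invariant (D : ℕ) (ω : ℕ → Bool) (i : ℕ) (hi : i < D + 2) (n : ℕ) :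
    ((randRollout D ω ⟨i, hi⟩ n : ℕ) = D + 1) ∨
    ((randRollout D ω ⟨i, hi⟩ n : ℕ) = i + n ∧ ∀ k < n, ω k = true) := by
  induction n with
  | zero => right; simp [randRollout]
  | succ n ih =>
    rcases ih with h | ⟨h, hall⟩
    · left
      simp only [randRollout, chainStep]
      rw [dif_neg (by rintro ⟨h1, _⟩; omega)]
    · by_cases hc : i + n ≤ D ∧ ω n = true
      · obtain ⟨hc1, hc2⟩ := hc
        right
        refine ⟨?_, ?_⟩
        · simp only [randRollout, chainStep]
          rw [dif_pos ⟨by omega, hc2⟩]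
          simp only [Fin.val_mk]
          omega
        · intro k hk
          rcases Nat.lt_succ_iff_lt_or_eq.mp hk with hk | hk
          · exact hall k hk
          · subst hk; exact hc2
      · left
        simp only [randRollout, chainStep]
        rw [dif_neg (by rintro ⟨h1, h2⟩; exact hc ⟨by omega, h2⟩)]

/-- Success probability of the uniform random policy on the chain: under the product
of countably many uniform Bernoulli(1/2) measures on `Ω = ℕ → Bool` (characterized by
its values `(1/2)^n` on all cylinder sets of `n` coordinates), the probability that the
random rollout started at `s_i` ever visits `s_m` equals `2^{-(m-i)}`, for
`0 ≤ i ≤ m ≤ D`. -/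
theorem chain_random_policy_success (D : ℕ) (hD : 1 ≤ D)
    (μ : Measure (ℕ → Bool)) [IsProbabilityMeasure μ]
    (hμ : ∀ (n : ℕ) (b : Fin n → Bool),
      μ {ω | ∀ k : Fin n, ω (k : ℕ) = b k} = (1 / 2 : ℝ≥0∞) ^ n)
    (i m : ℕ) (him : i ≤ m) (hm : m ≤ D) :
    μ {ω | ∃ n : ℕ, randRollout D ω ⟨i, by omega⟩ n = ⟨m, by omega⟩} =
      (1 / 2 : ℝ≥0∞) ^ (m - i) := by
  have hset : {ω : ℕ → Bool | ∃ n : ℕ, randRollout D ω ⟨i, by omega⟩ n = ⟨m, by omega⟩} =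
      {ω : ℕ → Bool | ∀ k : Fin (m - i), ω (k : ℕ) = (fun _ => true) k} := by
    ext ω
    simp only [Set.mem_setOf_eq]
    constructor
    · rintro ⟨n, hn⟩
      rcases rollout_invariant D ω i (by omega) n with h | ⟨h, hall⟩
      · rw [hn] at h; simp at h; omega
      · rw [hn] at h; simp at h
        intro k
        exact hall k (by omega)
    · intro hall
      refine ⟨m - i, ?_⟩
      have key : ∀ n, (hle2 : i + n ≤ D + 1) → (∀ k < n, ω k = true) →
          randRollout D ω ⟨i, by omega⟩ n = ⟨i + n, by omega⟩ := by
        intro n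
        induction n with
        | zero => intro _ _; simp [randRollout]
        | succ n ih =>
          intro hle hall'
          have h1 := ih (by omega) (fun k hk => hall' k (by omega))
          simp only [randRollout, h1, chainStep]
          rw [dif_pos ⟨by omega, hall' n (by omega)⟩]
          exact Fin.ext (by simp only [Fin.val_mk]; omega)
      have := key (m - i) (by omega) (fun k hk => hall ⟨k, hk⟩)
      rw [this]
      simp; omega
  rw [hset, hμ (m - i) (fun _ => true)]
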